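/- For complex P, Q with P ≠ 0, the termwise limit of the ₁φ̃₀ coefficient as the q-component parameter tends to infinity after rescaling z by 1/a_q: for each n ≥ 1, lim_{a_q → ∞} ((a_p, a_q); (P,Q))_n · (1/a_q)^n = (-1)^n Q^{n(n-1)/2}, i.e., it equals ((0,1);(P,Q))_n = ∏_{k=0}^{n-1}(0·P^k - 1·Q^k). -/

import Mathlib

/-! Each factor divided by `a_q` is `a_p P^k a_q⁻¹ - Q^k`, a continuous function of `a_q⁻¹`,
and `a_q⁻¹ → 0` as `a_q → ∞`; so the rescaled product tends to its value at `a_q⁻¹ = 0`. -/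

open Filter Finset Topology

theorem Finset.prod_range_neg_pow {R : Type*} [CommRing R] (q : R) (n : ℕ) :
    ∏ k ∈ range n, -q ^ k = (-1) ^ n * q ^ (n * (n - 1) / 2) := by
  rw [prod_congr rfl fun k _ => neg_eq_neg_one_mul (q ^ k), prod_mul_distrib, prod_const,
    card_range, prod_pow_eq_pow_sum, sum_range_id]

theorem tendsto_prod_sub_mul_inv_pow_cobounded {𝕜 ι : Type*} [NormedField 𝕜] (s : Finset ι)
    (a b : ι → 𝕜) :
    Tendsto (fun x : 𝕜 => (∏ i ∈ s, (a i - x * b i)) * (1 / x) ^ s.card)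
      (Bornology.cobounded 𝕜) (𝓝 (∏ i ∈ s, -b i)) := by
  have hcont : Continuous fun w : 𝕜 => ∏ i ∈ s, (a i * w - b i) := by fun_prop
  have hlim : Tendsto (fun x : 𝕜 => ∏ i ∈ s, (a i * x⁻¹ - b i))
      (Bornology.cobounded 𝕜) (𝓝 (∏ i ∈ s, -b i)) := by
    simpa [Function.comp_def] using (hcont.tendsto 0).comp tendsto_inv₀_cobounded
  refine hlim.congr' ?_
  filter_upwards [Bornology.eventually_ne_cobounded 0] with x hx
  rw [one_div, ← prod_const, ← prod_mul_distrib]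
  refine prod_congr rfl fun i _ => ?_
  field_simp

theorem pq_shifted_factorial_limit_general (P Q ap : ℂ) (n : ℕ) :
    Filter.Tendsto
      (fun aq : ℂ =>
        (∏ k ∈ Finset.range n, (ap * P ^ k - aq * Q ^ k)) * (1 / aq) ^ n)
      (Bornology.cobounded ℂ)
      (nhds ((-1 : ℂ) ^ n * Q ^ (n * (n - 1) / 2))) ∧
    (-1 : ℂ) ^ n * Q ^ (n * (n - 1) / 2) =
      ∏ k ∈ Finset.range n, ((0 : ℂ) * P ^ k - 1 * Q ^ k) := by
  rw [← prod_range_neg_pow]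
  refine ⟨?_, by simp⟩
  simpa using tendsto_prod_sub_mul_inv_pow_cobounded (range n) (fun k => ap * P ^ k) (Q ^ ·)

theorem pq_shifted_factorial_limit (P Q ap : ℂ) (hP : P ≠ 0) (n : ℕ) (hn : 1 ≤ n) :
    Filter.Tendsto
      (fun aq : ℂ =>
        (∏ k ∈ Finset.range n, (ap * P ^ k - aq * Q ^ k)) * (1 / aq) ^ n)
      (Bornology.cobounded ℂ)
      (nhds ((-1 : ℂ) ^ n * Q ^ (n * (n - 1) / 2))) ∧
    (-1 : ℂ) ^ n * Q ^ (n * (n - 1) / 2) =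
      ∏ k ∈ Finset.range n, ((0 : ℂ) * P ^ k - 1 * Q ^ k) :=
  pq_shifted_factorial_limit_general P Q ap n
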